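/- arXiv:2001.05671 — 3 statements merged into one kernel-verified Lean document; each statement's English description precedes it below -/
import Mathlib

section
/- The recurrence e(i,s) = min{ e(i-1,s), j_{i,s} } holds, where j_{i,s} is the index of the leftmost occurrence of the character A[i] in B[e(i-1,s-1)+1..n] (taken to be n+1 if no such occurrence exists or if e(i-1,s-1) = n+1). -/
/-!
Both sides are at most `|B| + 1`, so it suffices that they are `≤ m` simultaneously for every
`m ≤ |B|`. The LCS length of `A[1..i]` against `B[1..j]` grows by at most one per step in `j`,
so `e(i,s) ≤ m` iff `LCS(A[1..i], B[1..m]) ≥ s`; likewise `j_{i,s} ≤ m` iff `A[i]` occurs at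
some position `q + 1 ≤ m` of `B` with `LCS(A[1..i-1], B[1..q]) ≥ s - 1`. The recurrence is then
the usual one for LCS on the last letter of `A`: a common subsequence of `A[1..i]` and
`B[1..m]` either avoids `A[i]`, or ends with it, matched at such a position `q + 1`.
-/

/-- Length of a longest common subsequence of `A` and `B`. -/
noncomputable def lcsLen {α : Type*} (A B : List α) : ℕ :=
  sSup {s | ∃ Z : List α, Z.length = s ∧ Z.Sublist A ∧ Z.Sublist B}

/-- `eTab A B i s` is the minimum `j` such that the LCS length of `A[1..i]` and
`B[1..j]` equals `s`, and `|B| + 1` if no such `j` exists. -/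
noncomputable def eTab {α : Type*} (A B : List α) (i s : ℕ) : ℕ :=
  sInf ({j | lcsLen (A.take i) (B.take j) = s} ∪ {B.length + 1})

/-- `jIdx A B i s` is the leftmost position `q` (1-indexed) of the character `A[i]` in
`B[e(i-1,s-1)+1..n]`, taken to be `n+1` if no such occurrence exists (in particular
when `e(i-1,s-1) = n+1`). -/
noncomputable def jIdx {α : Type*} [Inhabited α] (A B : List α) (i s : ℕ) : ℕ :=
  sInf ({q | eTab A B (i-1) (s-1) < q ∧ q ≤ B.length ∧ B[q-1]! = A[i-1]!}
        ∪ {B.length + 1})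

namespace Nat

theorem sInf_union_singleton_le_iff {S : Set ℕ} {N m : ℕ} (hm : m < N) :
    sInf (S ∪ {N}) ≤ m ↔ ∃ x ∈ S, x ≤ m := by
  refine ⟨fun h => ?_, fun ⟨x, hx, hxm⟩ => (Nat.sInf_le (Or.inl hx)).trans hxm⟩
  rcases Nat.sInf_mem (⟨N, Or.inr rfl⟩ : (S ∪ {N}).Nonempty) with hS | hN
  · exact ⟨_, hS, h⟩
  · rw [Set.mem_singleton_iff.1 hN] at h
    omega

theorem eq_of_forall_le_iff_of_le_add_one {x y n : ℕ} (hx : x ≤ n + 1) (hy : y ≤ n + 1)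
    (h : ∀ m ≤ n, x ≤ m ↔ y ≤ m) : x = y := by
  by_contra hne
  rcases Nat.lt_or_gt_of_ne hne with hlt | hlt
  · exact absurd ((h x (by omega)).1 le_rfl) (by omega)
  · exact absurd ((h y (by omega)).2 le_rfl) (by omega)

theorem exists_le_eq_of_apply_add_one_le {f : ℕ → ℕ} (hf : ∀ k, f (k + 1) ≤ f k + 1)
    {m t : ℕ} (h0 : f 0 ≤ t) (ht : t ≤ f m) : ∃ j ≤ m, f j = t := by
  induction m with
  | zero => exact ⟨0, le_rfl, by omega⟩
  | succ m ih =>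
    by_cases h : t ≤ f m
    · obtain ⟨j, hj, hfj⟩ := ih h
      exact ⟨j, by omega, hfj⟩
    · exact ⟨m + 1, le_rfl, by have := hf m; omega⟩

end Nat

namespace List

variable {α : Type*}

theorem exists_getElem?_eq_sublist_take_of_append_singleton_sublist {Z B : List α} {a : α}
    (h : (Z ++ [a]).Sublist B) : ∃ q, B[q]? = some a ∧ Z.Sublist (B.take q) := by
  obtain ⟨r₁, r₂, rfl, hZ, ha⟩ := append_sublist_iff.1 h
  obtain ⟨u, v, rfl⟩ := append_of_mem (singleton_sublist.1 ha)
  refine ⟨(r₁ ++ u).length, ?_, ?_⟩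
  · rw [← append_assoc, getElem?_append_right le_rfl]
    simp
  · rw [← append_assoc, take_left]
    exact hZ.trans (sublist_append_left r₁ u)

end List

section LCS

variable {α : Type*}

theorem le_lcsLen_iff {A B : List α} {s : ℕ} :
    s ≤ lcsLen A B ↔ ∃ Z : List α, Z.Sublist A ∧ Z.Sublist B ∧ s ≤ Z.length := by
  set S := {s | ∃ Z : List α, Z.length = s ∧ Z.Sublist A ∧ Z.Sublist B}
  have hne : S.Nonempty := ⟨0, [], rfl, List.nil_sublist A, List.nil_sublist B⟩
  have hbdd : BddAbove S := ⟨A.length, by rintro _ ⟨Z, rfl, hA, -⟩; exact hA.length_le⟩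
  constructor
  · intro h
    obtain ⟨Z, hZ, hA, hB⟩ := Nat.sSup_mem hne hbdd
    exact ⟨Z, hA, hB, hZ ▸ h⟩
  · rintro ⟨Z, hA, hB, hs⟩
    exact hs.trans (le_csSup hbdd ⟨Z, rfl, hA, hB⟩)

theorem length_le_lcsLen {A B Z : List α} (hA : Z.Sublist A) (hB : Z.Sublist B) :
    Z.length ≤ lcsLen A B :=
  le_lcsLen_iff.2 ⟨Z, hA, hB, le_rfl⟩

theorem exists_sublist_length_eq_lcsLen (A B : List α) :
    ∃ Z : List α, Z.Sublist A ∧ Z.Sublist B ∧ Z.length = lcsLen A B := by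
  obtain ⟨Z, hA, hB, hs⟩ := le_lcsLen_iff.1 (le_refl (lcsLen A B))
  exact ⟨Z, hA, hB, le_antisymm (length_le_lcsLen hA hB) hs⟩

theorem lcsLen_nil_right (A : List α) : lcsLen A [] = 0 := by
  obtain ⟨Z, -, hB, hs⟩ := exists_sublist_length_eq_lcsLen A []
  simp [List.sublist_nil.1 hB] at hs
  exact hs.symm

theorem lcsLen_mono {A A' B B' : List α} (hA : A.Sublist A') (hB : B.Sublist B') :
    lcsLen A B ≤ lcsLen A' B' := by
  obtain ⟨Z, hZA, hZB, hs⟩ := exists_sublist_length_eq_lcsLen A B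
  exact hs ▸ length_le_lcsLen (hZA.trans hA) (hZB.trans hB)

theorem lcsLen_append_right_le (A B C : List α) :
    lcsLen A (B ++ C) ≤ lcsLen A B + C.length := by
  obtain ⟨Z, hZA, hZBC, hs⟩ := exists_sublist_length_eq_lcsLen A (B ++ C)
  obtain ⟨Z₁, Z₂, rfl, hZ₁, hZ₂⟩ := List.sublist_append_iff.1 hZBC
  have h₁ := length_le_lcsLen ((List.sublist_append_left Z₁ Z₂).trans hZA) hZ₁
  have h₂ := hZ₂.length_le
  rw [← hs, List.length_append]
  omega

theorem lcsLen_take_add_one_le (A B : List α) (k : ℕ) :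
    lcsLen A (B.take (k + 1)) ≤ lcsLen A (B.take k) + 1 := by
  rw [List.take_add_one]
  refine (lcsLen_append_right_le _ _ _).trans (Nat.add_le_add_left ?_ _)
  cases B[k]? <;> simp

theorem le_lcsLen_append_singleton_iff {A B : List α} {a : α} {s : ℕ} :
    s ≤ lcsLen (A ++ [a]) B ↔
      s ≤ lcsLen A B ∨ ∃ q, B[q]? = some a ∧ s - 1 ≤ lcsLen A (B.take q) := by
  constructor
  · intro h
    obtain ⟨Z, hZA, hZB, hs⟩ := le_lcsLen_iff.1 h
    obtain ⟨Z₁, Z₂, rfl, hZ₁, hZ₂⟩ := List.sublist_append_iff.1 hZA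
    rcases List.sublist_singleton.1 hZ₂ with rfl | rfl
    · rw [List.append_nil] at hZB hs
      exact Or.inl (hs.trans (length_le_lcsLen hZ₁ hZB))
    · obtain ⟨q, hq, hZ₁q⟩ := List.exists_getElem?_eq_sublist_take_of_append_singleton_sublist hZB
      have := length_le_lcsLen hZ₁ hZ₁q
      rw [List.length_append, List.length_singleton] at hs
      exact Or.inr ⟨q, hq, by omega⟩
  · rintro (h | ⟨q, hq, h⟩)
    · exact h.trans (lcsLen_mono (List.sublist_append_left A [a]) (List.Sublist.refl B))
    · obtain ⟨Z, hZA, hZB, hs⟩ := le_lcsLen_iff.1 h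
      have hB : (B.take q ++ [a]).Sublist B := by
        rw [← Option.toList_some, ← hq, ← List.take_add_one]
        exact List.take_sublist _ _
      refine le_lcsLen_iff.2 ⟨Z ++ [a], hZA.append (List.Sublist.refl _),
        (hZB.append (List.Sublist.refl _)).trans hB, ?_⟩
      rw [List.length_append, List.length_singleton]
      omega

end LCS

section Table

variable {α : Type*}

theorem eTab_le_length_add_one (A B : List α) (i s : ℕ) : eTab A B i s ≤ B.length + 1 :=
  Nat.sInf_le (Or.inr rfl)

theorem eTab_le_iff {A B : List α} {i s m : ℕ} (hm : m ≤ B.length) :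
    eTab A B i s ≤ m ↔ s ≤ lcsLen (A.take i) (B.take m) := by
  rw [eTab, Nat.sInf_union_singleton_le_iff (Nat.lt_add_one_of_le hm)]
  constructor
  · rintro ⟨j, hj, hjm⟩
    exact (Set.mem_ofPred_eq ▸ hj).ge.trans
      (lcsLen_mono (List.Sublist.refl _) (List.take_sublist_take_left hjm))
  · intro h
    obtain ⟨j, hjm, hj⟩ := Nat.exists_le_eq_of_apply_add_one_le
      (f := fun j => lcsLen (A.take i) (B.take j)) (lcsLen_take_add_one_le _ B)
      (by simp [lcsLen_nil_right]) h
    exact ⟨j, hj, hjm⟩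

theorem jIdx_le_iff [Inhabited α] {A B : List α} {i s m : ℕ} (hm : m ≤ B.length) :
    jIdx A B i s ≤ m ↔
      ∃ q < m, B[q]? = some A[i - 1]! ∧ s - 1 ≤ lcsLen (A.take (i - 1)) (B.take q) := by
  rw [jIdx, Nat.sInf_union_singleton_le_iff (Nat.lt_add_one_of_le hm)]
  constructor
  · rintro ⟨q, ⟨hlt, hqn, hq⟩, hqm⟩
    refine ⟨q - 1, by omega, ?_, (eTab_le_iff (by omega)).1 (by omega)⟩
    rw [← hq, getElem!_pos B (q - 1) (by omega), List.getElem?_eq_getElem]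
  · rintro ⟨q, hqm, hq, hlcs⟩
    have := (eTab_le_iff (by omega)).2 hlcs
    refine ⟨q + 1, ⟨by omega, by omega, ?_⟩, hqm⟩
    simp [List.getElem!_eq_getElem?_getD, hq]

end Table

theorem stmt_8_general {α : Type*} [Inhabited α] (A B : List α) (i s : ℕ)
    (hi : 1 ≤ i) (him : i ≤ A.length) :
    eTab A B i s = min (eTab A B (i-1) s) (jIdx A B i s) := by
  have hA : A.take i = A.take (i - 1) ++ [A[i - 1]!] := by
    obtain ⟨k, rfl⟩ : ∃ k, i = k + 1 := ⟨i - 1, by omega⟩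
    rw [Nat.add_sub_cancel, List.take_add_one, List.getElem?_eq_getElem him,
      getElem!_pos A k him]
    rfl
  refine Nat.eq_of_forall_le_iff_of_le_add_one (eTab_le_length_add_one A B i s)
    (min_le_of_left_le (eTab_le_length_add_one A B (i - 1) s)) fun m hm => ?_
  rw [min_le_iff, eTab_le_iff hm, eTab_le_iff hm, jIdx_le_iff hm, hA,
    le_lcsLen_append_singleton_iff]
  refine or_congr_right (exists_congr fun q => ?_)
  by_cases hq : q < m
  · simp [List.take_take, hq, hq.le]
  · simp [hq]

/-- the recurrence e(i,s) = min{e(i-1,s), j_{i,s}}. -/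
theorem stmt_8 {α : Type*} [Inhabited α] (A B : List α) (i s : ℕ)
    (hi : 1 ≤ i) (him : i ≤ A.length) (hs : 1 ≤ s) :
    eTab A B i s = min (eTab A B (i-1) s) (jIdx A B i s) :=
  stmt_8_general A B i s hi him
end

section
/- The recurrence d(i,s,k) = min({d(i-1,s,k)} ∪ {j_t : 0 ≤ t < r}) holds, where j_t is the smallest position j > d(i-1,s-1,t) in B such that B[j] = A[i] and there exists a string Z satisfying Property(i-1,s-1,t) with Z a subsequence of B[1..d(i-1,s-1,t)] and overlap(Z·A[i]) = k; j_t = n+1 if no such j or Z exists. -/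
/-!
A string counted by `d(i, s, k)` either avoids the letter `A[i]`, and is then counted by
`d(i-1, s, k)`, or is `Z₀ ++ [A[i]]` with `Z₀` counted by `d(i-1, s-1, t)` for
`t = overlap(Z₀)`. In the second case the earliest embedding into `B` puts `A[i]` at a matching
position after an embedding of `Z₀`, and `Z₀` can be traded for the earliest-embedded witness of
`d(i-1, s-1, t)`: the overlap of `Z₀ ++ [A[i]]` depends only on `overlap(Z₀)`, since the borders
of a string that are shorter than its longest border are exactly the borders of that longest
border. Both sides of the recurrence are compared through `d ≤ j ↔ …`.
-/

/-- `overlapLen P S` is the length of the longest prefix of `P` that is a suffix of `S`. -/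
def overlapLen {α : Type*} [DecidableEq α] (P S : List α) : ℕ :=
  Nat.findGreatest (fun k => P.take k <:+ S) P.length

/-- `Property A P i s k Z`: Z is a subsequence of A[1..i], Z does not contain P as a
substring, |Z| = s, and overlap(Z) = k. -/
def Property {α : Type*} [DecidableEq α] (A P : List α) (i s k : ℕ) (Z : List α) : Prop :=
  Z.Sublist (A.take i) ∧ ¬ P <:+: Z ∧ Z.length = s ∧ overlapLen P Z = k

/-- `dTab A B P i s k` is the minimum `j` such that some `Z` satisfying
`Property A P i s k` is a subsequence of `B[1..j]`; `|B| + 1` if no such `Z` exists. -/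
noncomputable def dTab {α : Type*} [DecidableEq α] (A B P : List α) (i s k : ℕ) : ℕ :=
  sInf ({j | ∃ Z : List α, Property A P i s k Z ∧ Z.Sublist (B.take j)}
        ∪ {B.length + 1})

/-- `jT A B P i s k t` is the smallest position `j > d(i-1,s-1,t)` in `B` such that
`B[j] = A[i]` and there exists `Z` satisfying `Property(i-1,s-1,t)` that is a
subsequence of `B[1..d(i-1,s-1,t)]` with `overlap(Z·A[i]) = k`; `n+1` if none exists. -/
noncomputable def jT {α : Type*} [DecidableEq α] [Inhabited α]
    (A B P : List α) (i s k t : ℕ) : ℕ :=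
  sInf ({j | dTab A B P (i-1) (s-1) t < j ∧ j ≤ B.length ∧ B[j-1]! = A[i-1]! ∧
          ∃ Z : List α, Property A P (i-1) (s-1) t Z ∧
            Z.Sublist (B.take (dTab A B P (i-1) (s-1) t)) ∧
            overlapLen P (Z ++ [A[i-1]!]) = k}
        ∪ {B.length + 1})

namespace List

variable {α : Type*}

theorem append_singleton_sublist_append_singleton_iff {l l' : List α} {a b : α} :
    l ++ [a] <+ l' ++ [b] ↔ l ++ [a] <+ l' ∨ (a = b ∧ l <+ l') := by
  rw [← reverse_sublist (l₁ := l ++ [a]) (l₂ := l')]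
  simp [← reverse_sublist (l₁ := l ++ [a]), sublist_cons_iff]

theorem append_singleton_sublist_take_iff {l B : List α} {a : α} {j : ℕ} :
    l ++ [a] <+ B.take j ↔ ∃ p < j, ∃ hp : p < B.length, B[p] = a ∧ l <+ B.take p := by
  induction j with
  | zero => simp
  | succ j ih =>
    by_cases hj : j < B.length
    · rw [take_add_one, getElem?_eq_getElem hj, Option.toList_some,
        append_singleton_sublist_append_singleton_iff, ih]
      constructor
      · rintro (⟨p, hpj, hp, rfl, hl⟩ | ⟨rfl, hl⟩)
        · exact ⟨p, by omega, hp, rfl, hl⟩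
        · exact ⟨j, by omega, hj, rfl, hl⟩
      · rintro ⟨p, hpj, hp, rfl, hl⟩
        rcases Nat.lt_succ_iff_lt_or_eq.1 hpj with hpj | rfl
        · exact Or.inl ⟨p, hpj, hp, rfl, hl⟩
        · exact Or.inr ⟨rfl, hl⟩
    · have hB : B.take (j + 1) = B.take j := by
        rw [take_of_length_le (by omega), take_of_length_le (by omega)]
      rw [hB, ih]
      exact ⟨fun ⟨p, _, hp, h⟩ => ⟨p, by omega, hp, h⟩,
        fun ⟨p, _, hp, h⟩ => ⟨p, by omega, hp, h⟩⟩

theorem take_add_one_suffix_append_singleton_iff {l l' : List α} {q : ℕ} {a : α}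
    (hq : q < l.length) : l.take (q + 1) <:+ l' ++ [a] ↔ l.take q <:+ l' ∧ l[q] = a := by
  rw [take_add_one, getElem?_eq_getElem hq, Option.toList_some, suffix_concat_iff]
  constructor
  · rintro (h | ⟨t, ht, hsuf⟩)
    · exact absurd (append_eq_nil_iff.1 h).2 (cons_ne_nil _ _)
    · obtain ⟨rfl, h⟩ := append_inj' ht rfl
      exact ⟨hsuf, singleton_inj.1 h⟩
  · rintro ⟨h, rfl⟩
    exact Or.inr ⟨_, rfl, h⟩

end List

section Overlap

variable {α : Type*} [DecidableEq α] {P S S' : List α} {q : ℕ}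

theorem overlapLen_le_length (P S : List α) : overlapLen P S ≤ P.length :=
  Nat.findGreatest_le _

theorem take_overlapLen_suffix (P S : List α) : P.take (overlapLen P S) <:+ S :=
  Nat.findGreatest_spec (P := fun k => P.take k <:+ S) (Nat.zero_le _) (by simp)

theorem le_overlapLen (hq : q ≤ P.length) (h : P.take q <:+ S) : q ≤ overlapLen P S :=
  Nat.le_findGreatest hq h

theorem overlapLen_lt_length_of_not_infix (h : ¬ P <:+: S) : overlapLen P S < P.length := by
  refine (overlapLen_le_length P S).lt_of_ne fun heq => h ?_
  simpa [heq] using (take_overlapLen_suffix P S).isInfix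

theorem not_infix_append_singleton {a : α} (hS : ¬ P <:+: S)
    (h : overlapLen P (S ++ [a]) < P.length) : ¬ P <:+: S ++ [a] := by
  rw [List.infix_concat_iff]
  rintro (hsuf | hinf)
  · exact h.not_ge (le_overlapLen le_rfl (by simpa using hsuf))
  · exact hS hinf

theorem take_suffix_iff_suffix_take_overlapLen (hq : q ≤ P.length) :
    P.take q <:+ S ↔ P.take q <:+ P.take (overlapLen P S) := by
  refine ⟨fun h => List.suffix_of_suffix_length_le h (take_overlapLen_suffix P S) ?_,
    fun h => h.trans (take_overlapLen_suffix P S)⟩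
  simp only [List.length_take]
  exact min_le_min_right _ (le_overlapLen hq h)

theorem overlapLen_append_singleton_congr (a : α) (h : overlapLen P S = overlapLen P S') :
    overlapLen P (S ++ [a]) = overlapLen P (S' ++ [a]) := by
  have key : ∀ {T T' : List α}, overlapLen P T = overlapLen P T' →
      overlapLen P (T ++ [a]) ≤ overlapLen P (T' ++ [a]) := by
    intro T T' hT
    refine le_overlapLen (overlapLen_le_length _ _) ?_
    have hsuf := take_overlapLen_suffix P (T ++ [a])
    have hle := overlapLen_le_length P (T ++ [a])
    generalize overlapLen P (T ++ [a]) = q at hsuf hle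
    cases q with
    | zero => simp
    | succ q =>
      rw [List.take_add_one_suffix_append_singleton_iff hle,
        take_suffix_iff_suffix_take_overlapLen (by omega), hT] at hsuf
      rwa [List.take_add_one_suffix_append_singleton_iff hle,
        take_suffix_iff_suffix_take_overlapLen (by omega)]
  exact le_antisymm (key h) (key h.symm)

end Overlap

theorem Nat.sInf_le_iff {S : Set ℕ} (hS : S.Nonempty) {j : ℕ} :
    sInf S ≤ j ↔ ∃ x ∈ S, x ≤ j :=
  ⟨fun h => ⟨sInf S, Nat.sInf_mem hS, h⟩,
    fun ⟨_, hx, hxj⟩ => (Nat.sInf_le hx).trans hxj⟩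

theorem Nat.sInf_union_singleton_le_iff_s11 (S : Set ℕ) (m j : ℕ) :
    sInf (S ∪ {m}) ≤ j ↔ (∃ x ∈ S, x ≤ j) ∨ m ≤ j := by
  rw [Nat.sInf_le_iff ⟨m, Or.inr rfl⟩]
  simp [or_and_right, exists_or, or_comm]

section Recurrence

variable {α : Type*} [DecidableEq α] {A B P : List α} {i s k t j : ℕ}

theorem dTab_le_iff : dTab A B P i s k ≤ j ↔
    (∃ Z, Property A P i s k Z ∧ Z.Sublist (B.take j)) ∨ B.length + 1 ≤ j := by
  rw [dTab, Nat.sInf_union_singleton_le_iff_s11]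
  refine or_congr_left ⟨?_, fun ⟨Z, hZ, hZB⟩ => ⟨j, ⟨Z, hZ, hZB⟩, le_rfl⟩⟩
  rintro ⟨x, ⟨Z, hZ, hZB⟩, hxj⟩
  exact ⟨Z, hZ, hZB.trans (List.take_sublist_take_left hxj)⟩

theorem property_add_one_add_one_iff (hi : i < A.length) (hk : k < P.length) {Z : List α} :
    Property A P (i + 1) (s + 1) k Z ↔ Property A P i (s + 1) k Z ∨
      ∃ t < P.length, ∃ Z₀, Property A P i s t Z₀ ∧ overlapLen P (Z₀ ++ [A[i]]) = k ∧
        Z = Z₀ ++ [A[i]] := by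
  have hA : A.take (i + 1) = A.take i ++ [A[i]] := by
    rw [List.take_add_one, List.getElem?_eq_getElem hi, Option.toList_some]
  constructor
  · rintro ⟨hZA, hPZ, hlen, hov⟩
    rw [hA, List.sublist_append_iff] at hZA
    obtain ⟨Z₀, Z₁, rfl, hZ₀, hZ₁⟩ := hZA
    rcases List.sublist_singleton.1 hZ₁ with rfl | rfl
    · exact Or.inl ⟨by simpa using hZ₀, hPZ, by simpa using hlen, by simpa using hov⟩
    · have hPZ₀ : ¬ P <:+: Z₀ := fun h => hPZ (h.trans List.infix_append_left)
      exact Or.inr ⟨_, overlapLen_lt_length_of_not_infix hPZ₀, Z₀,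
        ⟨hZ₀, hPZ₀, by simpa using hlen, rfl⟩, hov, rfl⟩
  · rintro (⟨hZA, hPZ, hlen, hov⟩ | ⟨t, -, Z₀, ⟨hZ₀, hPZ₀, hlen, -⟩, hov, rfl⟩)
    · exact ⟨hZA.trans (List.take_sublist_take_left i.le_succ), hPZ, hlen, hov⟩
    · exact ⟨hA ▸ hZ₀.append (List.Sublist.refl _),
        not_infix_append_singleton hPZ₀ (hov ▸ hk), by simp [hlen], hov⟩

theorem jT_add_one_add_one_le_iff [Inhabited α] (hi : i < A.length) :
    jT A B P (i + 1) (s + 1) k t ≤ j ↔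
      (∃ Z₀, Property A P i s t Z₀ ∧ overlapLen P (Z₀ ++ [A[i]]) = k ∧
        (Z₀ ++ [A[i]]).Sublist (B.take j)) ∨ B.length + 1 ≤ j := by
  rw [jT, Nat.sInf_union_singleton_le_iff_s11]
  simp only [Nat.add_sub_cancel, getElem!_pos A i hi]
  refine or_congr_left ⟨?_, ?_⟩
  · rintro ⟨x, ⟨hdx, hxB, hBx, Z, hZ, hZB, hov⟩, hxj⟩
    refine ⟨Z, hZ, hov, List.append_singleton_sublist_take_iff.2
      ⟨x - 1, by omega, by omega, ?_, hZB.trans (List.take_sublist_take_left (by omega))⟩⟩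
    rwa [getElem!_pos B (x - 1) (by omega)] at hBx
  · rintro ⟨Z₀, hZ₀, hov, hZ₀B⟩
    obtain ⟨p, hpj, hp, hBp, hZ₀p⟩ := List.append_singleton_sublist_take_iff.1 hZ₀B
    have hdp : dTab A B P i s t ≤ p := dTab_le_iff.2 (Or.inl ⟨Z₀, hZ₀, hZ₀p⟩)
    obtain ⟨Z, hZ, hZB⟩ | hdB := dTab_le_iff.1 (le_refl (dTab A B P i s t))
    · refine ⟨p + 1,
        ⟨by omega, hp, by simpa [getElem!_pos B p hp] using hBp, Z, hZ, hZB, ?_⟩, hpj⟩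
      rw [overlapLen_append_singleton_congr _ (hZ.2.2.2.trans hZ₀.2.2.2.symm), hov]
    · omega

end Recurrence

theorem stmt_11_general {α : Type*} [DecidableEq α] [Inhabited α] (A B P : List α) (i s k : ℕ)
    (hi : 1 ≤ i) (him : i ≤ A.length) (hs : 1 ≤ s)
    (hk : k < P.length) :
    dTab A B P i s k
      = min (dTab A B P (i-1) s k) (sInf {v | ∃ t < P.length, v = jT A B P i s k t}) := by
  obtain ⟨i, rfl⟩ : ∃ i', i = i' + 1 := ⟨i - 1, by omega⟩
  obtain ⟨s, rfl⟩ : ∃ s', s = s' + 1 := ⟨s - 1, by omega⟩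
  have hiA : i < A.length := by omega
  refine eq_of_forall_ge_iff fun j => ?_
  have hne : {v | ∃ t < P.length, v = jT A B P (i + 1) (s + 1) k t}.Nonempty :=
    ⟨_, k, hk, rfl⟩
  rw [min_le_iff, Nat.sInf_le_iff hne]
  simp only [Nat.add_sub_cancel, dTab_le_iff, property_add_one_add_one_iff hiA hk,
    Set.mem_ofPred_eq]
  constructor
  · rintro (⟨Z, hZ | ⟨t, ht, Z₀, hZ₀, hov, rfl⟩, hZB⟩ | hj)
    · exact Or.inl (Or.inl ⟨Z, hZ, hZB⟩)
    · exact Or.inr ⟨_, ⟨t, ht, rfl⟩,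
        (jT_add_one_add_one_le_iff hiA).2 (Or.inl ⟨Z₀, hZ₀, hov, hZB⟩)⟩
    · exact Or.inl (Or.inr hj)
  · rintro ((⟨Z, hZ, hZB⟩ | hj) | ⟨_, ⟨t, ht, rfl⟩, hjt⟩)
    · exact Or.inl ⟨Z, Or.inl hZ, hZB⟩
    · exact Or.inr hj
    · rcases (jT_add_one_add_one_le_iff hiA).1 hjt with ⟨Z₀, hZ₀, hov, hZB⟩ | hj
      · exact Or.inl ⟨_, Or.inr ⟨t, ht, Z₀, hZ₀, hov, rfl⟩, hZB⟩
      · exact Or.inr hj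

/-- the recurrence d(i,s,k) = min({d(i-1,s,k)} ∪ {j_t : 0 ≤ t < r}). -/
theorem stmt_11 {α : Type*} [DecidableEq α] [Inhabited α] (A B P : List α) (i s k : ℕ)
    (hi : 1 ≤ i) (him : i ≤ A.length) (hs : 1 ≤ s) (hsm : s ≤ A.length)
    (hk : k < P.length) :
    dTab A B P i s k
      = min (dTab A B P (i-1) s k) (sInf {v | ∃ t < P.length, v = jT A B P i s k t}) :=
  stmt_11_general A B P i s k hi him hs hk
end

section
/- Monotone absence (Observation 2): if for some i and s, d(i,s,k) = n+1 for all 0 ≤ k < r, then for every q with 1 ≤ q ≤ m - i and every k, d(i+q, s+q, k) = n+1. -/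
theorem List.Sublist.rdrop {α : Type*} {l₁ l₂ : List α} (h : l₁.Sublist l₂) (n : ℕ) :
    (l₁.rdrop n).Sublist (l₂.rdrop n) := by
  simpa only [List.rdrop_eq_reverse_drop_reverse] using (h.reverse.drop n).reverse

theorem overlapLen_lt_length {α : Type*} [DecidableEq α] {P Z : List α} (hP : ¬ P <:+: Z) :
    overlapLen P Z < P.length := by
  refine lt_of_le_of_ne (Nat.findGreatest_le _) fun hfull => hP ?_
  have hspec : P.take (overlapLen P Z) <:+ Z :=
    Nat.findGreatest_spec (P := fun k => P.take k <:+ Z) (Nat.zero_le _) (by simp)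
  rw [hfull, List.take_length] at hspec
  exact hspec.isInfix

theorem dTab_eq_length_succ_iff {α : Type*} [DecidableEq α] {A B P : List α} {i s k : ℕ} :
    dTab A B P i s k = B.length + 1 ↔ ∀ Z, Property A P i s k Z → ¬ Z.Sublist B := by
  constructor
  · intro hd Z hZ hZB
    have hmem : B.length ∈ {j | ∃ Z : List α, Property A P i s k Z ∧ Z.Sublist (B.take j)} :=
      ⟨Z, hZ, by rwa [List.take_length]⟩
    have := Nat.sInf_le (Set.mem_union_left {B.length + 1} hmem)
    rw [dTab] at hd
    omega
  · intro hnone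
    have hempty : {j | ∃ Z : List α, Property A P i s k Z ∧ Z.Sublist (B.take j)} = ∅ :=
      Set.eq_empty_of_forall_notMem fun j ⟨Z, hZ, hZB⟩ =>
        hnone Z hZ (hZB.trans (List.take_sublist j B))
    rw [dTab, hempty, Set.empty_union, csInf_singleton]

theorem Property.take {α : Type*} [DecidableEq α] {A P Z : List α} {i s q k : ℕ}
    (hZ : Property A P (i + q) (s + q) k Z) (hq : q ≤ A.length - i) :
    Property A P i s (overlapLen P (Z.take s)) (Z.take s) := by
  obtain ⟨hZA, hfree, hlen, -⟩ := hZ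
  have hZrdrop : Z.rdrop q = Z.take s := by simp [List.rdrop, hlen]
  have hArdrop : (A.take (i + q)).rdrop q = A.take i := by
    simp only [List.rdrop, List.take_take, List.length_take, List.take_eq_take_iff]
    omega
  refine ⟨hZrdrop ▸ hArdrop ▸ hZA.rdrop q, fun hP => hfree ?_, by simp [hlen], rfl⟩
  exact hP.trans (List.take_prefix s Z).isInfix

/-- Observation 2: if d(i,s,k) = n+1 for all 0 ≤ k < r, then
d(i+q, s+q, k) = n+1 for every 1 ≤ q ≤ m-i and every k. -/
theorem stmt_15 {α : Type*} [DecidableEq α] (A B P : List α) (i s : ℕ)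
    (h : ∀ k < P.length, dTab A B P i s k = B.length + 1) :
    ∀ q, 1 ≤ q → q ≤ A.length - i → ∀ k, dTab A B P (i+q) (s+q) k = B.length + 1 := by
  intro q _ hq k
  refine dTab_eq_length_succ_iff.2 fun Z hZ hZB => ?_
  have hZs := hZ.take hq
  exact dTab_eq_length_succ_iff.1 (h _ (overlapLen_lt_length hZs.2.1)) _ hZs
    ((List.take_sublist s Z).trans hZB)
end
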